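/- arXiv:2508.02676 — 2 statements merged into one kernel-verified Lean document; each statement's English description precedes it below -/
import Mathlib

section
/- Let ρ : ℝ × ℝ^d → ℝ be twice continuously differentiable (jointly in (t,x)) and everywhere positive, and suppose ρ satisfies the heat equation ∂_t ρ(t,x) = Δ_x ρ(t,x) for all (t,x). Set s(t,x) := log ρ(t,x), and let X : ℝ → ℝ^d be differentiable with X'(t) = −∇_x s(t, X(t)) for all t. Then the function t ↦ s(t, X(t)) is differentiable with d/dt [s(t, X(t))] = Δ_x s(t,·)(X(t)) for all t. -/
/-!
Since `∇ log ρ = ∇ρ / ρ`, the product rule for the divergence gives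
`Δ log ρ = Δρ / ρ - ‖∇ log ρ‖²`, while the heat equation gives `∂ₜ log ρ = Δρ / ρ`.
By the chain rule, `d/dt s(t, X t) = ∂ₜ s + ⟪∇s, X'⟫ = Δρ / ρ - ‖∇s‖² = Δs`.
-/

/-- The divergence of a vector field on Euclidean space: the trace of its Jacobian. -/
noncomputable def vecDiv {d : ℕ} (F : EuclideanSpace ℝ (Fin d) → EuclideanSpace ℝ (Fin d))
    (x : EuclideanSpace ℝ (Fin d)) : ℝ :=
  LinearMap.trace ℝ (EuclideanSpace ℝ (Fin d))
    (fderiv ℝ F x : EuclideanSpace ℝ (Fin d) →ₗ[ℝ] EuclideanSpace ℝ (Fin d))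

/-- The Laplacian of a scalar function: the divergence of its gradient. -/
noncomputable def lap {d : ℕ} (f : EuclideanSpace ℝ (Fin d) → ℝ)
    (x : EuclideanSpace ℝ (Fin d)) : ℝ :=
  vecDiv (fun y => gradient f y) x

open InnerProductSpace

section Gradient

variable {F : Type*} [NormedAddCommGroup F] [InnerProductSpace ℝ F] [CompleteSpace F]

lemma ContDiff.differentiable_gradient {f : F → ℝ} (hf : ContDiff ℝ 2 f) :
    Differentiable ℝ (gradient f) :=
  (toDual ℝ F).symm.toContinuousLinearEquiv.differentiable.comp
    ((hf.fderiv_right (by norm_num)).differentiable one_ne_zero)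

lemma gradient_log {f : F → ℝ} {x : F} (hf : DifferentiableAt ℝ f x) (hx : f x ≠ 0) :
    gradient (fun y => Real.log (f y)) x = (f x)⁻¹ • gradient f x := by
  rw [gradient, (hf.hasFDerivAt.log hx).fderiv, map_smul, gradient]

end Gradient

lemma hasDerivAt_apply_of_differentiableAt_uncurry {E G : Type*} [NormedAddCommGroup E]
    [NormedSpace ℝ E] [NormedAddCommGroup G] [NormedSpace ℝ G] {f : ℝ → E → G} {X : ℝ → E}
    {v : E} {t : ℝ} (hf : DifferentiableAt ℝ (fun q : ℝ × E => f q.1 q.2) (t, X t))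
    (hX : HasDerivAt X v t) :
    HasDerivAt (fun u => f u (X u)) (deriv (fun u => f u (X t)) t + fderiv ℝ (f t) (X t) v) t := by
  set Df := fderiv ℝ (fun q : ℝ × E => f q.1 q.2) (t, X t)
  have hcurve : HasDerivAt (fun u => f u (X u)) (Df (1, v)) t :=
    (hf.hasFDerivAt.comp_hasDerivAt t ((hasDerivAt_id t).prodMk hX) :)
  have htime : HasDerivAt (fun u => f u (X t)) (Df (1, 0)) t :=
    (hf.hasFDerivAt.comp_hasDerivAt t ((hasDerivAt_id t).prodMk (hasDerivAt_const t (X t))) :)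
  have hspace : HasFDerivAt (f t) (Df.comp (.inr ℝ ℝ E)) (X t) :=
    hf.hasFDerivAt.comp (X t) (hasFDerivAt_prodMk_right t (X t))
  rw [htime.deriv, hspace.fderiv, ContinuousLinearMap.comp_apply, ContinuousLinearMap.inr_apply,
    ← map_add, Prod.mk_add_mk, add_zero, zero_add]
  exact hcurve

section Laplacian

variable {d : ℕ}

local notation "E" => EuclideanSpace ℝ (Fin d)

lemma vecDiv_smul {φ : E → ℝ} {G : E → E} {x : E} (hφ : DifferentiableAt ℝ φ x) (hG : DifferentiableAt ℝ G x) :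
    vecDiv (fun y => φ y • G y) x = φ x * vecDiv G x + fderiv ℝ φ x (G x) := by
  rw [vecDiv, fderiv_fun_smul hφ hG]
  push_cast
  rw [map_add, map_smul, vecDiv, smul_eq_mul]
  have hrankOne : (((fderiv ℝ φ x).smulRight (G x) : E →L[ℝ] E) : E →ₗ[ℝ] E) =
      (fderiv ℝ φ x : E →ₗ[ℝ] ℝ).smulRight (G x) := rfl
  rw [hrankOne, LinearMap.trace_smulRight, ContinuousLinearMap.coe_coe]

lemma lap_log {f : E → ℝ} (hf : ContDiff ℝ 2 f) (hf0 : ∀ y, f y ≠ 0) (x : E) :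
    lap (fun y => Real.log (f y)) x = lap f x / f x - ‖gradient (fun y => Real.log (f y)) x‖ ^ 2 := by
  have hfd : Differentiable ℝ f := hf.differentiable two_ne_zero
  have hgrad : gradient (fun y => Real.log (f y)) = fun y => (f y)⁻¹ • gradient f y :=
    funext fun y => gradient_log (hfd y) (hf0 y)
  have hinv : HasFDerivAt (fun y => (f y)⁻¹) (-(f x ^ 2)⁻¹ • fderiv ℝ f x) x :=
    (hasDerivAt_inv (hf0 x)).comp_hasFDerivAt x (hfd x).hasFDerivAt
  rw [lap, hgrad, vecDiv_smul hinv.differentiableAt (hf.differentiable_gradient x), hinv.fderiv,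
    smul_apply, ← inner_gradient_left, real_inner_self_eq_norm_sq, norm_smul,
    lap, smul_eq_mul, Real.norm_eq_abs, mul_pow, sq_abs]
  field_simp
  ring

end Laplacian

/-- For a positive solution of the heat equation, along trajectories moving with velocity
`−∇s` where `s = log ρ`, the material derivative of `s` equals `Δs`. -/
theorem stmt7 {d : ℕ} (ρ : ℝ → EuclideanSpace ℝ (Fin d) → ℝ)
    (hρreg : ContDiff ℝ 2 fun q : ℝ × EuclideanSpace ℝ (Fin d) => ρ q.1 q.2)
    (hρpos : ∀ t x, 0 < ρ t x)
    (hheat : ∀ t x, deriv (fun u => ρ u x) t = lap (ρ t) x)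
    (s : ℝ → EuclideanSpace ℝ (Fin d) → ℝ)
    (hs : ∀ t x, s t x = Real.log (ρ t x))
    (X : ℝ → EuclideanSpace ℝ (Fin d))
    (hX : ∀ t, HasDerivAt X (- gradient (s t) (X t)) t) :
    ∀ t, HasDerivAt (fun u => s u (X u)) (lap (s t) (X t)) t := by
  intro t
  obtain rfl : s = fun t x => Real.log (ρ t x) := funext fun t => funext (hs t)
  have hρd : Differentiable ℝ fun q : ℝ × EuclideanSpace ℝ (Fin d) => ρ q.1 q.2 :=
    hρreg.differentiable two_ne_zero
  have hslice : ContDiff ℝ 2 (ρ t) := hρreg.comp (contDiff_const.prodMk contDiff_id)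
  have htime : deriv (fun u => Real.log (ρ u (X t))) t = lap (ρ t) (X t) / ρ t (X t) := by
    have hρt : DifferentiableAt ℝ (fun u => ρ u (X t)) t :=
      (hρd _).comp t (differentiableAt_id.prodMk (differentiableAt_const (X t)))
    rw [deriv.log hρt (hρpos t (X t)).ne', hheat]
  have hspace : ∀ g : EuclideanSpace ℝ (Fin d) → ℝ,
      fderiv ℝ g (X t) (-gradient g (X t)) = -‖gradient g (X t)‖ ^ 2 := fun g => by
    rw [map_neg, ← inner_gradient_left, real_inner_self_eq_norm_sq]
  refine (hasDerivAt_apply_of_differentiableAt_uncurry (f := fun u y => Real.log (ρ u y))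
    ((hρd _).log (hρpos t (X t)).ne') (hX t)).congr_deriv ?_
  rw [htime, hspace, lap_log hslice fun y => (hρpos t y).ne']
  ring
end

section
/- Let E be a real normed vector space, f : ℝ → E, t ∈ ℝ, τ > 0, and M ≥ 0. Suppose f is four times differentiable on the closed interval [t − 3τ, t] with ‖f''''(s)‖ ≤ M for all s ∈ [t − 3τ, t]. Then ‖ ((11/6) f(t) − 3 f(t − τ) + (3/2) f(t − 2τ) − (1/3) f(t − 3τ))/τ − f'(t) ‖ ≤ (9/4) M τ³; in particular the BDF3 approximation of f'(t) has truncation error O(τ³). -/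
/-!
The BDF3 weights reproduce the derivative of every cubic exactly, so the truncation error is a
combination of the third-order Taylor remainders of `f` about `t` at `t - τ`, `t - 2τ`, `t - 3τ`.
Each remainder at `t - kτ` is at most `M (kτ)⁴ / 24`; since `f''''` need not be continuous, this
is proved by fencing the remainder, as a function of the centre `c`, with `M (c - x)⁴ / 24`.
Finally `3 · 1 + (3/2) · 16 + (1/3) · 81 = 54` gives the constant `54 / 24 = 9 / 4`.
-/

open Set

section

variable {E : Type*} [NormedAddCommGroup E] [NormedSpace ℝ E]

noncomputable def taylorRemainder3 (f f' f'' f''' : ℝ → E) (c x : ℝ) : E :=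
  f x - f c - (x - c) • f' c - ((x - c) ^ 2 / 2) • f'' c - ((x - c) ^ 3 / 6) • f''' c

lemma hasDerivWithinAt_taylorRemainder3_center {f f' f'' f''' f'''' : ℝ → E} {S : Set ℝ}
    {s : ℝ} (x : ℝ) (hf : HasDerivWithinAt f (f' s) S s) (hf' : HasDerivWithinAt f' (f'' s) S s)
    (hf'' : HasDerivWithinAt f'' (f''' s) S s) (hf''' : HasDerivWithinAt f''' (f'''' s) S s) :
    HasDerivWithinAt (fun c => taylorRemainder3 f f' f'' f''' c x)
      (-((x - s) ^ 3 / 6) • f'''' s) S s := by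
  have h1 : HasDerivWithinAt (fun c => x - c) (-1) S s :=
    ((hasDerivAt_id s).const_sub x).hasDerivWithinAt
  have h2 : HasDerivWithinAt (fun c => (x - c) ^ 2 / 2) (-(x - s)) S s :=
    ((h1.fun_pow 2).div_const 2).congr_deriv (by ring)
  have h3 : HasDerivWithinAt (fun c => (x - c) ^ 3 / 6) (-((x - s) ^ 2 / 2)) S s :=
    ((h1.fun_pow 3).div_const 6).congr_deriv (by ring)
  exact ((((hasDerivWithinAt_const s S (f x)).fun_sub hf).fun_sub (h1.fun_smul hf')).fun_sub
    (h2.fun_smul hf'')).fun_sub (h3.fun_smul hf''') |>.congr_deriv (by module)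

lemma norm_taylorRemainder3_le {f f' f'' f''' f'''' : ℝ → E} {a b M : ℝ}
    (hf : ∀ s ∈ Icc a b, HasDerivWithinAt f (f' s) (Icc a b) s)
    (hf' : ∀ s ∈ Icc a b, HasDerivWithinAt f' (f'' s) (Icc a b) s)
    (hf'' : ∀ s ∈ Icc a b, HasDerivWithinAt f'' (f''' s) (Icc a b) s)
    (hf''' : ∀ s ∈ Icc a b, HasDerivWithinAt f''' (f'''' s) (Icc a b) s)
    (hbound : ∀ s ∈ Icc a b, ‖f'''' s‖ ≤ M) {x : ℝ} (hx : x ∈ Icc a b) :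
    ‖taylorRemainder3 f f' f'' f''' b x‖ ≤ M * (b - x) ^ 4 / 24 := by
  have hsub : Icc x b ⊆ Icc a b := Icc_subset_Icc_left hx.1
  have hderiv : ∀ s ∈ Icc a b, HasDerivWithinAt (fun c => taylorRemainder3 f f' f'' f''' c x)
      (-((x - s) ^ 3 / 6) • f'''' s) (Icc a b) s := fun s hs =>
    hasDerivWithinAt_taylorRemainder3_center x (hf s hs) (hf' s hs) (hf'' s hs) (hf''' s hs)
  refine image_norm_le_of_norm_deriv_right_le_deriv_boundary
    (f' := fun s => -((x - s) ^ 3 / 6) • f'''' s) (B := fun c => M * (c - x) ^ 4 / 24)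
    (B' := fun c => M * (c - x) ^ 3 / 6)
    (fun s hs => (hderiv s (hsub hs)).continuousWithinAt.mono hsub) ?_ ?_ ?_ ?_
    (right_mem_Icc.mpr hx.2)
  · intro s hs
    exact (hderiv s (hsub (Ico_subset_Icc_self hs))).mono_of_mem_nhdsWithin
      (Icc_mem_nhdsGE_of_mem ⟨hx.1.trans hs.1, hs.2⟩)
  · simp [taylorRemainder3]
  · intro c
    exact ((((hasDerivAt_id' c).sub_const x).fun_pow 4).const_mul M).div_const 24 |>.congr_deriv
      (by ring)
  · intro s hs
    have hxs : 0 ≤ s - x := sub_nonneg.mpr hs.1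
    calc ‖-((x - s) ^ 3 / 6) • f'''' s‖ = (s - x) ^ 3 / 6 * ‖f'''' s‖ := by
          rw [norm_smul, Real.norm_eq_abs, show -((x - s) ^ 3 / 6) = (s - x) ^ 3 / 6 by ring,
            abs_of_nonneg (by positivity)]
      _ ≤ (s - x) ^ 3 / 6 * M := by gcongr; exact hbound s (hsub (Ico_subset_Icc_self hs))
      _ = M * (s - x) ^ 3 / 6 := by ring

lemma bdf3_sub_deriv_eq (f f' f'' f''' : ℝ → E) {τ : ℝ} (hτ : τ ≠ 0) (t : ℝ) :
    τ⁻¹ • ((11 / 6 : ℝ) • f t - (3 : ℝ) • f (t - τ) + (3 / 2 : ℝ) • f (t - 2 * τ)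
        - (1 / 3 : ℝ) • f (t - 3 * τ)) - f' t
      = τ⁻¹ • ((-3 : ℝ) • taylorRemainder3 f f' f'' f''' t (t - τ)
          + (3 / 2 : ℝ) • taylorRemainder3 f f' f'' f''' t (t - 2 * τ)
          - (1 / 3 : ℝ) • taylorRemainder3 f f' f'' f''' t (t - 3 * τ)) := by
  simp only [taylorRemainder3]
  match_scalars <;> field_simp <;> ring

end

theorem stmt15_general {E : Type*} [NormedAddCommGroup E] [NormedSpace ℝ E]
    (f f' f'' f''' f'''' : ℝ → E) (t τ M : ℝ) (hτ : 0 < τ)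
    (hf : ∀ s ∈ Set.Icc (t - 3 * τ) t, HasDerivWithinAt f (f' s) (Set.Icc (t - 3 * τ) t) s)
    (hf' : ∀ s ∈ Set.Icc (t - 3 * τ) t, HasDerivWithinAt f' (f'' s) (Set.Icc (t - 3 * τ) t) s)
    (hf'' : ∀ s ∈ Set.Icc (t - 3 * τ) t, HasDerivWithinAt f'' (f''' s) (Set.Icc (t - 3 * τ) t) s)
    (hf''' : ∀ s ∈ Set.Icc (t - 3 * τ) t,
      HasDerivWithinAt f''' (f'''' s) (Set.Icc (t - 3 * τ) t) s)
    (hbound : ∀ s ∈ Set.Icc (t - 3 * τ) t, ‖f'''' s‖ ≤ M) :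
    ‖τ⁻¹ • ((11 / 6 : ℝ) • f t - (3 : ℝ) • f (t - τ) + (3 / 2 : ℝ) • f (t - 2 * τ)
        - (1 / 3 : ℝ) • f (t - 3 * τ)) - f' t‖ ≤ 9 / 4 * M * τ ^ 3 := by
  set R := taylorRemainder3 f f' f'' f''' t
  have hR (k : ℝ) (hk₀ : 0 ≤ k) (hk₃ : k ≤ 3) : ‖R (t - k * τ)‖ ≤ M * (k * τ) ^ 4 / 24 := by
    have h := norm_taylorRemainder3_le hf hf' hf'' hf''' hbound (x := t - k * τ)
      ⟨by nlinarith, by nlinarith⟩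
    rwa [sub_sub_cancel] at h
  calc _ = τ⁻¹ * ‖(-3 : ℝ) • R (t - τ) + (3 / 2 : ℝ) • R (t - 2 * τ)
          - (1 / 3 : ℝ) • R (t - 3 * τ)‖ := by
        rw [bdf3_sub_deriv_eq f f' f'' f''' hτ.ne', norm_smul, Real.norm_of_nonneg (by positivity)]
    _ ≤ τ⁻¹ * (‖(-3 : ℝ) • R (t - τ)‖ + ‖(3 / 2 : ℝ) • R (t - 2 * τ)‖
          + ‖(1 / 3 : ℝ) • R (t - 3 * τ)‖) := by
        gcongr
        exact norm_sub_le_of_le (norm_add_le _ _) le_rfl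
    _ = τ⁻¹ * (3 * ‖R (t - τ)‖ + 3 / 2 * ‖R (t - 2 * τ)‖ + 1 / 3 * ‖R (t - 3 * τ)‖) := by
        simp only [norm_smul]
        norm_num
    _ ≤ τ⁻¹ * (3 * (M * τ ^ 4 / 24) + 3 / 2 * (M * (2 * τ) ^ 4 / 24)
          + 1 / 3 * (M * (3 * τ) ^ 4 / 24)) := by
        gcongr
        exacts [by simpa using hR 1 zero_le_one (by norm_num), hR 2 (by norm_num) (by norm_num),
          hR 3 (by norm_num) le_rfl]
    _ = 9 / 4 * M * τ ^ 3 := by field_simp; ring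

/-- BDF3 truncation error: if `‖f''''‖ ≤ M` on `[t − 3τ, t]`, then
`‖((11/6)f(t) − 3f(t − τ) + (3/2)f(t − 2τ) − (1/3)f(t − 3τ))/τ − f'(t)‖ ≤ (9/4) M τ³`. -/
theorem stmt15 {E : Type*} [NormedAddCommGroup E] [NormedSpace ℝ E]
    (f f' f'' f''' f'''' : ℝ → E) (t τ M : ℝ) (hτ : 0 < τ) (hM : 0 ≤ M)
    (hf : ∀ s ∈ Set.Icc (t - 3 * τ) t, HasDerivWithinAt f (f' s) (Set.Icc (t - 3 * τ) t) s)
    (hf' : ∀ s ∈ Set.Icc (t - 3 * τ) t, HasDerivWithinAt f' (f'' s) (Set.Icc (t - 3 * τ) t) s)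
    (hf'' : ∀ s ∈ Set.Icc (t - 3 * τ) t, HasDerivWithinAt f'' (f''' s) (Set.Icc (t - 3 * τ) t) s)
    (hf''' : ∀ s ∈ Set.Icc (t - 3 * τ) t,
      HasDerivWithinAt f''' (f'''' s) (Set.Icc (t - 3 * τ) t) s)
    (hbound : ∀ s ∈ Set.Icc (t - 3 * τ) t, ‖f'''' s‖ ≤ M) :
    ‖τ⁻¹ • ((11 / 6 : ℝ) • f t - (3 : ℝ) • f (t - τ) + (3 / 2 : ℝ) • f (t - 2 * τ)
        - (1 / 3 : ℝ) • f (t - 3 * τ)) - f' t‖ ≤ 9 / 4 * M * τ ^ 3 :=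
  stmt15_general f f' f'' f''' f'''' t τ M hτ hf hf' hf'' hf''' hbound
end
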